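/- If λ has trivial p-core, then for every residue i mod p, the number of boxes of λ with content congruent to i mod p equals |λ|/p. -/

import Mathlib

open Set

namespace MM

/-- `f : ℕ → ℕ` encodes a partition (0-indexed rows) if it is antitone and eventually zero. -/
def IsPartition (f : ℕ → ℕ) : Prop :=
  Antitone f ∧ ∃ N, ∀ i, N ≤ i → f i = 0

/-- boxes of the Young diagram (0-indexed) -/
def cells (f : ℕ → ℕ) : Set (ℕ × ℕ) := {c | c.2 < f c.1}

noncomputable def size (f : ℕ → ℕ) : ℕ := (cells f).ncard

noncomputable def transpose (f : ℕ → ℕ) : ℕ → ℕ := fun j => {i | j < f i}.ncard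

/-- hook length of a box -/
noncomputable def hook (f : ℕ → ℕ) (c : ℕ × ℕ) : ℤ :=
  (f c.1 : ℤ) + transpose f c.2 - c.1 - c.2 - 1

/-- content of a box -/
def content (c : ℕ × ℕ) : ℤ := (c.2 : ℤ) - c.1

/-- Maya (beta) set of a partition: beads at positions `f i - i - 1`. -/
def maya (f : ℕ → ℕ) : Set ℤ := {z | ∃ i : ℕ, z = (f i : ℤ) - i - 1}

/-- the `i`-th largest element ("bead" of rank `i`) of a set of integers -/
noncomputable def bead (S : Set ℤ) (i : ℕ) : ℤ :=
  sSup {z | z ∈ S ∧ {w | w ∈ S ∧ z < w}.ncard = i}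

/-- the partition encoded by a Maya set: row `i` counts holes below bead `i`. -/
noncomputable def partOf (S : Set ℤ) : ℕ → ℕ :=
  fun i => {t | t ∉ S ∧ t < bead S i}.ncard

/-- column-`μ` bead set: bead `z` lies in column `(-z-1) mod p`. -/
def col (S : Set ℤ) (p μ : ℕ) : Set ℤ := {k | (p : ℤ) * k - μ - 1 ∈ S}

noncomputable def charge (S : Set ℤ) : ℤ :=
  ({z | z ∈ S ∧ 0 ≤ z}.ncard : ℤ) - ({z | z ∉ S ∧ z < 0}.ncard : ℤ)

/-- the `μ`-th component of the `p`-quotient of the partition `f` -/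
noncomputable def pquot (f : ℕ → ℕ) (p μ : ℕ) : ℕ → ℕ :=
  partOf (col (maya f) p μ)

/-- the Maya set of the `p`-core: slide all beads down in each column. -/
noncomputable def coreMaya (f : ℕ → ℕ) (p : ℕ) : Set ℤ :=
  {z | ∃ μ : ℕ, μ < p ∧ ∃ k : ℤ, k < charge (col (maya f) p μ) ∧ z = (p:ℤ) * k - μ - 1}

/-- the `p`-core of `f` -/
noncomputable def pcore (f : ℕ → ℕ) (p : ℕ) : ℕ → ℕ := partOf (coreMaya f p)

/-- the rearrangement map `σ̂`: overall bead rank ↦ `p * (rank within its column) + column`. -/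
noncomputable def sigmaHat (f : ℕ → ℕ) (p : ℕ) : ℕ → ℕ :=
  fun I =>
    p * ({w | w ∈ maya f ∧ bead (maya f) I < w ∧ (p:ℤ) ∣ (w - bead (maya f) I)}.ncard)
      + ((-(bead (maya f) I) - 1) % (p:ℤ)).toNat

/-- the `p`-signature of `f`: the sign of `σ̂` if finitary, else `0`,
computed as the parity of the (finite) number of inversions. -/
noncomputable def psign (f : ℕ → ℕ) (p : ℕ) : ℤ :=
  letI := Classical.propDecidable
  if {q : ℕ × ℕ | q.1 < q.2 ∧ sigmaHat f p q.2 < sigmaHat f p q.1}.Finite then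
    (-1) ^ ({q : ℕ × ℕ | q.1 < q.2 ∧ sigmaHat f p q.2 < sigmaHat f p q.1}.ncard)
  else 0

end MM

/-!
Count the boxes of each row by content: along row `i` the number of boxes of content `≡ a`
minus the number of content `≡ a + 1` telescopes to `[β_i ≡ a] - [-i - 1 ≡ a]`, where
`β_i = λ_i - i - 1` is the `i`-th bead. Summed over the rows, at `a = -μ - 1` this is the
charge of the `μ`-th runner of the `p`-abacus minus one. Hence the runner charges sum to `p`,
and the count of boxes of content `≡ a` is independent of `a` exactly when every charge is `1`.
This is what a trivial `p`-core says: if runner `ν` had charge `≤ 0`, another runner would have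
charge `≥ 2`, so the core would have a bead at a nonnegative position above the empty position
`-ν - 1`, i.e. a nonempty first row.
-/

open Finset

namespace MM

def betaNum (f : ℕ → ℕ) (i : ℕ) : ℤ := (f i : ℤ) - i - 1

section Beta

variable {f : ℕ → ℕ} {N : ℕ}

theorem betaNum_strictAnti (hf : Antitone f) : StrictAnti (betaNum f) :=
  strictAnti_nat_of_succ_lt fun i => by
    have := hf (Nat.le_add_right i 1)
    simp only [betaNum]
    push_cast
    omega

theorem neg_sub_one_le_betaNum (i : ℕ) : -(i : ℤ) - 1 ≤ betaNum f i := by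
  simp only [betaNum]
  omega

theorem betaNum_of_le (hN : ∀ i, N ≤ i → f i = 0) {i : ℕ} (hi : N ≤ i) :
    betaNum f i = -(i : ℤ) - 1 := by
  simp [betaNum, hN i hi]

theorem mem_maya_iff {z : ℤ} : z ∈ maya f ↔ ∃ i, betaNum f i = z :=
  ⟨fun ⟨i, hi⟩ => ⟨i, hi.symm⟩, fun ⟨i, hi⟩ => ⟨i, hi.symm⟩⟩

theorem mem_maya_of_le (hN : ∀ i, N ≤ i → f i = 0) {z : ℤ} (hz : z ≤ -(N : ℤ) - 1) :
    z ∈ maya f := by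
  refine mem_maya_iff.2 ⟨(-z - 1).toNat, ?_⟩
  rw [betaNum_of_le hN (by omega)]
  omega

end Beta

theorem sum_range_ite_sub_ite_add_one {R : Type*} [Ring R] [DecidableEq R] (m : ℕ) (s a : R) :
    ∑ j ∈ Finset.range m,
        ((if (j : R) + s = a then (1 : ℤ) else 0) - if (j : R) + s = a + 1 then 1 else 0)
      = (if (m : R) + s - 1 = a then 1 else 0) - if s - 1 = a then 1 else 0 := by
  have key := Finset.sum_range_sub (fun j : ℕ => if (j : R) + s - 1 = a then (1 : ℤ) else 0) m
  simp only [Nat.cast_add, Nat.cast_one, Nat.cast_zero, zero_add] at key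
  rw [← key]
  refine sum_congr rfl fun j _ => ?_
  simp only [show (j : R) + 1 + s - 1 = j + s by abel, sub_eq_iff_eq_add (a := (j : R) + s)]


noncomputable def contentCount (f : ℕ → ℕ) (p : ℕ) (a : ZMod p) : ℕ :=
  {c | c ∈ cells f ∧ (content c : ZMod p) = a}.ncard

section ContentCount

variable {f : ℕ → ℕ} {N p : ℕ}

theorem cells_eq_coe_filter (hf : Antitone f) (hN : ∀ i, N ≤ i → f i = 0) :
    cells f = ↑{c ∈ Finset.range N ×ˢ Finset.range (f 0) | c.2 < f c.1} := by
  ext ⟨i, j⟩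
  simp only [cells, Set.mem_ofPred_eq, coe_filter, mem_product, Finset.mem_range]
  refine ⟨fun h => ⟨⟨?_, h.trans_le (hf i.zero_le)⟩, h⟩, And.right⟩
  by_contra hi
  simp [hN i (not_lt.1 hi)] at h

theorem contentCount_eq_sum (hf : Antitone f) (hN : ∀ i, N ≤ i → f i = 0) (a : ZMod p) :
    contentCount f p a
      = ∑ i ∈ Finset.range N, #{j ∈ Finset.range (f i) | (content (i, j) : ZMod p) = a} := by
  simp only [contentCount, cells_eq_coe_filter hf hN, mem_coe, ← coe_filter, Set.ncard_coe_finset]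
  rw [filter_filter, card_filter, sum_product]
  refine sum_congr rfl fun i _ => ?_
  have hrow : {j ∈ Finset.range (f 0) | j < f i} = Finset.range (f i) := by
    ext j
    simp only [mem_filter, Finset.mem_range]
    have := hf i.zero_le
    omega
  rw [card_filter, ← hrow, sum_filter]
  simp only [ite_and]

theorem size_eq_sum_contentCount [NeZero p] (hf : Antitone f) (hN : ∀ i, N ≤ i → f i = 0) :
    size f = ∑ a : ZMod p, contentCount f p a := by
  simp only [size, contentCount, cells_eq_coe_filter hf hN, mem_coe, ← coe_filter,
    Set.ncard_coe_finset]
  exact card_eq_sum_card_fiberwise (f := fun c => (content c : ZMod p)) fun _ _ => mem_univ _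

theorem contentCount_sub_contentCount_add_one (hf : Antitone f) (hN : ∀ i, N ≤ i → f i = 0)
    (a : ZMod p) :
    (contentCount f p a : ℤ) - contentCount f p (a + 1)
      = (#{i ∈ Finset.range N | (betaNum f i : ZMod p) = a} : ℤ)
        - #{i ∈ Finset.range N | -((i : ℕ) : ZMod p) - 1 = a} := by
  simp only [contentCount_eq_sum hf hN, card_filter, Nat.cast_sum, ← sum_sub_distrib]
  refine sum_congr rfl fun i _ => ?_
  have := sum_range_ite_sub_ite_add_one (f i) (-(i : ZMod p)) a
  simp only [content, betaNum]
  push_cast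
  convert this using 3 <;> ring_nf

end ContentCount

theorem charge_eq_ncard_sub {S : Set ℤ} {K : ℕ} (hlow : ∀ k < -(K : ℤ), k ∈ S)
    (hfin : {k | k ∈ S ∧ -(K : ℤ) ≤ k}.Finite) :
    charge S = ({k | k ∈ S ∧ -(K : ℤ) ≤ k}.ncard : ℤ) - K := by
  have hI : (Set.Ico (-(K : ℤ)) 0).ncard = K := by
    rw [← Finset.coe_Ico, Set.ncard_coe_finset, Int.card_Ico]
    omega
  have hsplit :
      {k | k ∈ S ∧ -(K : ℤ) ≤ k} = {k | k ∈ S ∧ 0 ≤ k} ∪ (Set.Ico (-(K : ℤ)) 0 ∩ S) := by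
    ext k
    simp only [Set.mem_ofPred_eq, Set.mem_union, Set.mem_inter_iff, Set.mem_Ico]
    grind
  have hholes : {k | k ∉ S ∧ k < 0} = Set.Ico (-(K : ℤ)) 0 \ S := by
    ext k
    simp only [Set.mem_ofPred_eq, Set.mem_sdiff, Set.mem_Ico]
    grind
  have hdisj : Disjoint {k | k ∈ S ∧ 0 ≤ k} (Set.Ico (-(K : ℤ)) 0 ∩ S) :=
    Set.disjoint_left.2 fun _ hk hk' => absurd hk.2 (not_le.2 hk'.1.2)
  rw [hsplit] at hfin ⊢
  rw [charge, hholes, Set.ncard_union_eq hdisj (hfin.subset Set.subset_union_left)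
    (hfin.subset Set.subset_union_right)]
  have := Set.ncard_inter_add_ncard_sdiff_eq_ncard (Set.Ico (-(K : ℤ)) 0) S (Set.finite_Ico _ _)
  omega

section Column

variable {f : ℕ → ℕ} {N p μ : ℕ}

theorem intCast_eq_neg_natCast_sub_one_iff_dvd (z : ℤ) :
    (z : ZMod p) = -(μ : ZMod p) - 1 ↔ (p : ℤ) ∣ z + μ + 1 := by
  rw [← ZMod.intCast_zmod_eq_zero_iff_dvd]
  push_cast
  constructor <;> intro h <;> linear_combination h

theorem col_maya_inter_eq_image (hN : ∀ i, N ≤ i → f i = 0) (hp : 0 < p)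
    (hμ : μ < p) {K : ℕ} (hNK : N ≤ p * (K + 1)) :
    {k | k ∈ col (maya f) p μ ∧ -(K : ℤ) ≤ k}
      = (fun i => (betaNum f i + μ + 1) / p) ''
          ↑{i ∈ Finset.range (p * (K + 1)) | (betaNum f i : ZMod p) = -(μ : ZMod p) - 1} := by
  have hp' : (0 : ℤ) < p := by exact_mod_cast hp
  have hμ' : (μ : ℤ) < p := by exact_mod_cast hμ
  have hNK' : (N : ℤ) ≤ p * (K + 1) := by exact_mod_cast hNK
  ext k
  simp only [col, Set.mem_ofPred_eq, Set.mem_image, coe_filter, Finset.mem_range,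
    intCast_eq_neg_natCast_sub_one_iff_dvd]
  constructor
  · rintro ⟨hk, hKk⟩
    obtain ⟨i, hi⟩ := mem_maya_iff.1 hk
    refine ⟨i, ⟨?_, ⟨k, by rw [hi]; ring⟩⟩, ?_⟩
    · by_contra hin
      have hi' := betaNum_of_le hN (i := i) (by push_cast [not_lt] at hin; omega)
      push_cast [not_lt] at hin
      nlinarith
    · rw [hi, show (p : ℤ) * k - μ - 1 + μ + 1 = p * k by ring]
      exact Int.mul_ediv_cancel_left k hp'.ne'
  · rintro ⟨i, ⟨hin, hdvd⟩, rfl⟩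
    have hk := Int.mul_ediv_cancel' hdvd
    refine ⟨mem_maya_iff.2 ⟨i, by rw [hk]; ring⟩, ?_⟩
    have := neg_sub_one_le_betaNum (f := f) i
    have hin' : (i : ℤ) < p * (K + 1) := by exact_mod_cast hin
    nlinarith

theorem card_filter_range_mul_neg_sub_one_eq (hp : 0 < p) (m : ℕ) :
    #{i ∈ Finset.range (p * m) | -((i : ℕ) : ZMod p) - 1 = -(μ : ZMod p) - 1} = m := by
  have hcount := Nat.count_modEq_card (p * m) hp μ
  simp only [Nat.mul_div_cancel_left m hp, Nat.mul_mod_right, Nat.not_lt_zero, if_false,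
    add_zero, Nat.count_eq_card_filter_range] at hcount
  refine Eq.trans ?_ hcount
  simp only [sub_left_inj, neg_inj, ZMod.natCast_eq_natCast_iff]

theorem charge_col_maya (hf : Antitone f) (hN : ∀ i, N ≤ i → f i = 0) (hp : 0 < p)
    (hμ : μ < p) :
    charge (col (maya f) p μ)
      = (contentCount f p (-(μ : ZMod p) - 1) : ℤ) - contentCount f p (-(μ : ZMod p)) + 1 := by
  -- Runner `μ` is full below `-N`, and its beads at `k ≥ -N` come from the rows `i < p (N + 1)`.
  have hNK : N ≤ p * (N + 1) := by nlinarith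
  have hN' : ∀ i, p * (N + 1) ≤ i → f i = 0 := fun i hi => hN i (hNK.trans hi)
  have hlow : ∀ k < -(N : ℤ), k ∈ col (maya f) p μ := by
    intro k hk
    refine mem_maya_of_le hN ?_
    have : (p : ℤ) * k ≤ p * (-N - 1) := mul_le_mul_of_nonneg_left (by omega) (by positivity)
    nlinarith
  have hinj : Set.InjOn (fun i => (betaNum f i + μ + 1) / p)
      ↑{i ∈ Finset.range (p * (N + 1)) | (betaNum f i : ZMod p) = -(μ : ZMod p) - 1} := by
    intro i hi j hj hij
    simp only [coe_filter, Set.mem_ofPred_eq, intCast_eq_neg_natCast_sub_one_iff_dvd] at hi hj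
    have := congrArg ((p : ℤ) * ·) hij
    simp only [Int.mul_ediv_cancel' hi.2, Int.mul_ediv_cancel' hj.2] at this
    exact (betaNum_strictAnti hf).injective (by linarith)
  have hcc := contentCount_sub_contentCount_add_one hf hN' (-(μ : ZMod p) - 1)
  rw [sub_add_cancel, card_filter_range_mul_neg_sub_one_eq hp] at hcc
  have himage := col_maya_inter_eq_image hN hp hμ hNK
  rw [charge_eq_ncard_sub hlow (himage ▸ (finite_toSet _).image _), himage, hinj.ncard_image,
    Set.ncard_coe_finset]
  push_cast at hcc
  linarith

end Column

theorem bead_zero_of_isGreatest {S : Set ℤ} {a : ℤ} (h : IsGreatest S a) : bead S 0 = a := by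
  have htop : {z | z ∈ S ∧ {w | w ∈ S ∧ z < w}.ncard = 0} = {a} := by
    ext z
    simp only [Set.mem_ofPred_eq, Set.mem_singleton_iff]
    constructor
    · rintro ⟨hz, hcard⟩
      refine le_antisymm (h.2 hz) (not_lt.1 fun hza => ?_)
      have hfin : {w | w ∈ S ∧ z < w}.Finite :=
        (Set.finite_Ioc z a).subset fun w hw => ⟨hw.2, h.2 hw.1⟩
      rw [Set.ncard_eq_zero hfin] at hcard
      exact hcard.subset ⟨h.1, hza⟩
    · rintro rfl
      refine ⟨h.1, ?_⟩
      have : {w | w ∈ S ∧ z < w} = ∅ :=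
        Set.eq_empty_iff_forall_notMem.2 fun w hw => not_lt.2 (h.2 hw.1) hw.2
      rw [this, Set.ncard_empty]
  rw [bead, htop, csSup_singleton]

theorem partOf_zero_ne_zero {S : Set ℤ} {L t z : ℤ} (hlow : ∀ y < L, y ∈ S) (hbdd : BddAbove S)
    (ht : t ∉ S) (hz : z ∈ S) (htz : t < z) : partOf S 0 ≠ 0 := by
  have hmax : IsGreatest S (sSup S) := ⟨Int.csSup_mem ⟨z, hz⟩ hbdd, fun _ hy => le_csSup hbdd hy⟩
  have hfin : {y | y ∉ S ∧ y < sSup S}.Finite :=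
    (Set.finite_Ico L (sSup S)).subset fun y hy => ⟨not_lt.1 fun hyL => hy.1 (hlow y hyL), hy.2⟩
  rw [partOf, bead_zero_of_isGreatest hmax, ← Nat.pos_iff_ne_zero, Set.ncard_pos hfin]
  exact ⟨t, ht, htz.trans_le (hmax.2 hz)⟩

-- `coreMaya f p` is, by definition, `mayaOfCharges p` of the runner charges of `maya f`.
def mayaOfCharges (p : ℕ) (c : ℕ → ℤ) : Set ℤ :=
  {z | ∃ μ : ℕ, μ < p ∧ ∃ k : ℤ, k < c μ ∧ z = (p : ℤ) * k - μ - 1}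

section MayaOfCharges

variable {p : ℕ} {c : ℕ → ℤ}

theorem exists_eq_mul_sub_sub_one (hp : 0 < p) (z : ℤ) : ∃ μ < p, ∃ k : ℤ, z = p * k - μ - 1 := by
  have hp' : (0 : ℤ) < p := by exact_mod_cast hp
  refine ⟨((-z - 1) % p).toNat, ?_, -((-z - 1) / p), ?_⟩
  · have := Int.emod_lt_of_pos (-z - 1) hp'
    omega
  · have := Int.emod_add_mul_ediv (-z - 1) p
    have := Int.emod_nonneg (-z - 1) hp'.ne'
    rw [Int.toNat_of_nonneg this]
    linarith

theorem mul_sub_sub_one_mem_mayaOfCharges_iff {μ : ℕ} (hμ : μ < p) {k : ℤ} :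
    (p : ℤ) * k - μ - 1 ∈ mayaOfCharges p c ↔ k < c μ := by
  refine ⟨fun ⟨ν, hν, l, hl, heq⟩ => ?_, fun hk => ⟨μ, hμ, k, hk, rfl⟩⟩
  have hμ' : (μ : ℤ) < p := by exact_mod_cast hμ
  have hν' : (ν : ℤ) < p := by exact_mod_cast hν
  have hkl : k = l := by
    rcases lt_trichotomy k l with h | h | h
    · nlinarith
    · exact h
    · nlinarith
  subst hkl
  obtain rfl : μ = ν := by omega
  exact hl

theorem bddAbove_mayaOfCharges : BddAbove (mayaOfCharges p c) := by
  obtain ⟨M, hM⟩ := ((Set.finite_Iio p).image c).bddAbove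
  refine ⟨p * M, ?_⟩
  rintro _ ⟨μ, hμ, k, hk, rfl⟩
  have : k ≤ M := hk.le.trans (hM ⟨μ, hμ, rfl⟩)
  nlinarith

theorem exists_forall_lt_mem_mayaOfCharges (hp : 0 < p) :
    ∃ L, ∀ z < L, z ∈ mayaOfCharges p c := by
  obtain ⟨m, hm⟩ := ((Set.finite_Iio p).image c).bddBelow
  refine ⟨p * m - p, fun z hz => ?_⟩
  obtain ⟨μ, hμ, k, rfl⟩ := exists_eq_mul_sub_sub_one hp z
  have hμ' : (μ : ℤ) < p := by exact_mod_cast hμ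
  have : m ≤ c μ := hm ⟨μ, hμ, rfl⟩
  rw [mul_sub_sub_one_mem_mayaOfCharges_iff hμ]
  nlinarith

theorem one_le_of_partOf_mayaOfCharges_zero_eq_zero (hp : 0 < p)
    (hsum : ∑ μ ∈ Finset.range p, c μ = p) (h0 : partOf (mayaOfCharges p c) 0 = 0)
    {ν : ℕ} (hν : ν < p) : 1 ≤ c ν := by
  by_contra! hcν
  obtain ⟨μ, hμ, hcμ⟩ : ∃ μ < p, 2 ≤ c μ := by
    by_contra! hc
    have : ∑ μ ∈ Finset.range p, c μ < ∑ μ ∈ Finset.range p, 1 :=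
      Finset.sum_lt_sum (fun μ hμ => by linarith [hc μ (Finset.mem_range.1 hμ)])
        ⟨ν, Finset.mem_range.2 hν, hcν⟩
    simp [hsum] at this
  obtain ⟨L, hlow⟩ := exists_forall_lt_mem_mayaOfCharges (c := c) hp
  have hμ' : (μ : ℤ) < p := by exact_mod_cast hμ
  refine partOf_zero_ne_zero hlow bddAbove_mayaOfCharges (t := p * 0 - ν - 1)
    (z := p * (c μ - 1) - μ - 1) ?_ ?_ ?_ h0
  · rw [mul_sub_sub_one_mem_mayaOfCharges_iff hν]
    omega
  · rw [mul_sub_sub_one_mem_mayaOfCharges_iff hμ]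
    omega
  · nlinarith

theorem eq_one_of_partOf_mayaOfCharges_zero_eq_zero (hp : 0 < p)
    (hsum : ∑ μ ∈ Finset.range p, c μ = p) (h0 : partOf (mayaOfCharges p c) 0 = 0)
    {ν : ℕ} (hν : ν < p) : c ν = 1 := by
  have hone := fun {μ} => one_le_of_partOf_mayaOfCharges_zero_eq_zero hp hsum h0 (ν := μ)
  refine le_antisymm (not_lt.1 fun hcν => ?_) (hone hν)
  have : ∑ μ ∈ Finset.range p, (1 : ℤ) < ∑ μ ∈ Finset.range p, c μ :=
    Finset.sum_lt_sum
      (fun μ hμ => hone (Finset.mem_range.1 hμ))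
      ⟨ν, Finset.mem_range.2 hν, hcν⟩
  simp [hsum] at this

end MayaOfCharges

section Equidistribution

variable {f : ℕ → ℕ} {N p : ℕ}

theorem sum_charge_col_maya (hf : Antitone f) (hN : ∀ i, N ≤ i → f i = 0) (hp : 0 < p) :
    ∑ μ ∈ Finset.range p, charge (col (maya f) p μ) = p := by
  rw [sum_congr rfl fun μ hμ => charge_col_maya hf hN hp (Finset.mem_range.1 hμ), sum_add_distrib,
    sum_const, card_range, nsmul_one, add_eq_right]
  have := sum_range_sub (fun μ : ℕ => (contentCount f p (-(μ : ZMod p)) : ℤ)) p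
  simp only [Nat.cast_add, Nat.cast_one, neg_add', ZMod.natCast_self, neg_zero, Nat.cast_zero,
    sub_self] at this
  exact this

theorem contentCount_eq_contentCount_zero [NeZero p] (hf : Antitone f)
    (hN : ∀ i, N ≤ i → f i = 0) (hcharge : ∀ μ < p, charge (col (maya f) p μ) = 1) (a : ZMod p) :
    contentCount f p a = contentCount f p 0 := by
  have hstep : ∀ b : ZMod p, contentCount f p (b + 1) = contentCount f p b := by
    intro b
    have hμ : ((-(b + 1)).val : ZMod p) = -(b + 1) := ZMod.natCast_zmod_val _
    have := charge_col_maya hf hN (NeZero.pos p) (ZMod.val_lt (-(b + 1)))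
    rw [hcharge _ (ZMod.val_lt _), hμ, neg_neg, add_sub_cancel_right] at this
    omega
  rw [← ZMod.natCast_zmod_val a]
  induction a.val with
  | zero => rw [Nat.cast_zero]
  | succ n ih => rw [Nat.cast_succ, hstep, ih]

end Equidistribution

end MM

/-- if λ has trivial p-core, contents are equidistributed mod p. -/
theorem content_equidistributed (p : ℕ) (hp : 0 < p) (f : ℕ → ℕ) (hf : MM.IsPartition f)
    (hcore : ∀ i, MM.pcore f p i = 0) :
    ∀ i : ℤ, p * {c | c ∈ MM.cells f ∧ MM.content c % p = i % p}.ncard = MM.size f := by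
  intro i
  obtain ⟨hanti, N, hN⟩ := hf
  have : NeZero p := ⟨hp.ne'⟩
  have hcharge : ∀ μ < p, MM.charge (MM.col (MM.maya f) p μ) = 1 := fun μ hμ =>
    MM.eq_one_of_partOf_mayaOfCharges_zero_eq_zero
      (c := fun μ => MM.charge (MM.col (MM.maya f) p μ)) hp (MM.sum_charge_col_maya hanti hN hp)
      (hcore 0) hμ
  have hclass :
      {c | c ∈ MM.cells f ∧ MM.content c % p = i % p}.ncard = MM.contentCount f p i := by
    simp only [MM.contentCount, ZMod.intCast_eq_intCast_iff']
  rw [hclass, MM.size_eq_sum_contentCount (p := p) hanti hN,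
    sum_congr rfl fun a _ => MM.contentCount_eq_contentCount_zero hanti hN hcharge a,
    MM.contentCount_eq_contentCount_zero hanti hN hcharge, sum_const, card_univ, ZMod.card,
    smul_eq_mul]
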